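/- Let F, A, B, T be formal power series over ℝ with zero constant coefficient satisfying B = X + T·B, A = X + (B + T)·A, and F = X + (A + B + T)·F. Define the map Φ on formal power series u with zero constant coefficient by Φ(u) = u + X·(1 − u)⁻¹ (note Φ(u) again has zero constant coefficient). Then F + A + B + T = Φ(Φ(Φ(T))). -/

import Mathlib

/-- The map `Φ(u) = u + X·(1 - u)⁻¹` on formal power series over `ℝ`. -/
noncomputable def Phi (u : PowerSeries ℝ) : PowerSeries ℝ :=
  u + PowerSeries.X * (1 - u)⁻¹

lemma phi_step (u v : PowerSeries ℝ) (hu : PowerSeries.constantCoeff u = 0)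
    (hv : v = PowerSeries.X + u * v) : u + v = Phi u := by
  have h1 : PowerSeries.constantCoeff (1 - u) ≠ 0 := by simp [hu]
  have : v = PowerSeries.X * (1 - u)⁻¹ := by
    rw [PowerSeries.eq_mul_inv_iff_mul_eq h1]
    ring_nf
    linear_combination hv
  rw [Phi, this]

theorem godel4_phi_reduction
    (F A B T : PowerSeries ℝ)
    (hF0 : PowerSeries.constantCoeff F = 0)
    (hA0 : PowerSeries.constantCoeff A = 0)
    (hB0 : PowerSeries.constantCoeff B = 0)
    (hT0 : PowerSeries.constantCoeff T = 0)
    (hB : B = PowerSeries.X + T * B)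
    (hA : A = PowerSeries.X + (B + T) * A)
    (hF : F = PowerSeries.X + (A + B + T) * F) :
    F + A + B + T = Phi (Phi (Phi T)) := by
  have h1 : T + B = Phi T := phi_step T B hT0 hB
  have h2 : (B + T) + A = Phi (B + T) := phi_step (B + T) A (by simp [hB0, hT0]) hA
  have h3 : (A + B + T) + F = Phi (A + B + T) := phi_step (A + B + T) F
    (by simp [hA0, hB0, hT0]) hF
  have e1 : Phi T = B + T := by rw [← h1]; ring
  have e2 : Phi (B + T) = A + B + T := by rw [← h2]; ring
  rw [e1, e2, ← h3]; ring
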